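/- Let g ≥ 2 and n ≥ 1 be integers and let a_1,…,a_n be nonnegative integers with a_1+⋯+a_n = 2g−3+n. Then P_{n,0} = (2g−3+n)·A_n. -/

import Mathlib

open Finset

/-- Binomial coefficient with integer lower index: `0` if the lower index is negative. -/
def zbinom (m : ℕ) (r : ℤ) : ℤ :=
  if 0 ≤ r then (m.choose r.toNat : ℤ) else 0

/-- Ordered `k`-tuples of pairwise disjoint nonempty subsets of `{1,…,n}` with union `{1,…,n}`. -/
def Parts (n k : ℕ) : Finset (Fin k → Finset (Fin n)) :=
  Finset.univ.filter fun I =>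
    (∀ j, I j ≠ ∅) ∧ (∀ j j', j ≠ j' → Disjoint (I j) (I j')) ∧
      Finset.univ.biUnion I = Finset.univ

/-- The double factorial ratio `(2d-1)!! / (2d+1-2c)!! = ∏_{i=1}^{c-1} (2d+1-2i)`. -/
def dfRatio (d c : ℕ) : ℤ := ∏ i ∈ Finset.range (c - 1), (2 * (d : ℤ) + 1 - 2 * (i + 1))

/-- The polynomial `P_{n,t}(a_1,…,a_n)` of the paper (with `g` implicit in the notation there). -/
def Pnt (g n t : ℕ) (a : Fin n → ℕ) : ℚ :=
  ∑ k ∈ Finset.Icc 1 n,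
    ((-1) ^ k * (Nat.factorial (2 * g - 3 + k) : ℚ) / (Nat.factorial k : ℚ)) *
      ∑ I ∈ Parts n k,
        ∑ d ∈ Finset.Nat.antidiagonalTuple k (g - 2 + n),
          ∑ A ∈ Finset.powersetCard (n - t) (Finset.univ : Finset (Fin k)),
            ∏ j, ((zbinom (2 * (∑ ℓ ∈ I j, a ℓ)) (2 * (d j : ℤ) - if j ∈ A then 1 else 0) : ℚ) *
              (dfRatio (d j) (I j).card : ℚ))

/-- `A_n(a_1,…,a_n)` of the paper. -/
def An (g n : ℕ) (a : Fin n → ℕ) : ℚ :=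
  (-1) ^ n * (Nat.factorial (2 * g - 4 + n) : ℚ) *
    ∑ o ∈ (Finset.Nat.antidiagonalTuple n (2 * g - 4 + n)).filter (fun o => ∀ j, Odd (o j)),
      ∏ j, (Nat.choose (2 * a j) (o j) : ℚ)


/-!
For `t = 0` the set `A` has `n` elements, so only `k = n` contributes and then `A` is everything;
an ordered partition into `n` blocks is a permutation placing singletons, and `dfRatio d 1 = 1`.
Tuples `d` with a zero entry contribute `C(m, -1) = 0`, and on the others `o = 2d - 1` is a
bijection onto the odd tuples of `A_n`. That sum is symmetric in `a`, so each of the `n!`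
permutations contributes the same, and `(2g-3+n)!/n! · n! = (2g-3+n) · (2g-4+n)!`.
-/

open Finset.Nat

section Parts

variable {n k : ℕ} {I : Fin k → Finset (Fin n)}

lemma mem_Parts : I ∈ Parts n k ↔ (∀ j, I j ≠ ∅) ∧ (∀ j j', j ≠ j' → Disjoint (I j) (I j')) ∧
    univ.biUnion I = univ := by
  simp [Parts]

lemma sum_card_of_mem_Parts (hI : I ∈ Parts n k) : ∑ j, (I j).card = n := by
  obtain ⟨-, hdisj, hcover⟩ := mem_Parts.1 hI
  rw [← card_biUnion fun j _ j' _ h => hdisj j j' h, hcover, card_univ, Fintype.card_fin]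

lemma card_eq_one_of_mem_Parts_self {I : Fin n → Finset (Fin n)} (hI : I ∈ Parts n n) (j : Fin n) :
    (I j).card = 1 := by
  have hpos : ∀ j ∈ univ, 1 ≤ (I j).card := fun j _ =>
    card_pos.2 (nonempty_iff_ne_empty.2 ((mem_Parts.1 hI).1 j))
  refine ((sum_eq_sum_iff_of_le hpos).1 ?_ j (mem_univ j)).symm
  simp [sum_card_of_mem_Parts hI]

lemma injective_perm_singletons (n : ℕ) :
    Function.Injective fun (σ : Equiv.Perm (Fin n)) j => ({σ j} : Finset (Fin n)) :=
  fun _ _ h => Equiv.ext fun j => singleton_injective (congrFun h j)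

lemma Parts_self_eq_image (n : ℕ) :
    Parts n n = univ.image fun (σ : Equiv.Perm (Fin n)) j => ({σ j} : Finset (Fin n)) := by
  ext I
  simp only [mem_image, mem_univ, true_and]
  constructor
  · intro hI
    choose f hf using fun j => card_eq_one.1 (card_eq_one_of_mem_Parts_self hI j)
    have hinj : f.Injective := fun j j' e => by
      by_contra h
      have := (mem_Parts.1 hI).2.1 j j' h
      rw [hf, hf, disjoint_singleton] at this
      exact this e
    exact ⟨Equiv.ofBijective f hinj.bijective_of_finite, funext fun j => (hf j).symm⟩
  · rintro ⟨σ, rfl⟩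
    refine mem_Parts.2 ⟨fun j => singleton_ne_empty _,
      fun j j' h => disjoint_singleton.2 (σ.injective.ne h), ?_⟩
    ext x
    simpa using ⟨σ.symm x, by simp⟩

end Parts

lemma zbinom_natCast (m r : ℕ) : zbinom m r = m.choose r := by
  simp [zbinom]

lemma zbinom_of_neg (m : ℕ) {r : ℤ} (hr : r < 0) : zbinom m r = 0 := by
  simp [zbinom, hr.not_ge]

lemma dfRatio_one (d : ℕ) : dfRatio d 1 = 1 := by
  simp [dfRatio]

lemma Pnt_zero_eq (g : ℕ) {n : ℕ} (hn : 1 ≤ n) (a : Fin n → ℕ) :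
    Pnt g n 0 a = (-1) ^ n * ((2 * g - 3 + n).factorial / n.factorial : ℚ) *
      ∑ σ : Equiv.Perm (Fin n), ∑ d ∈ antidiagonalTuple n (g - 2 + n),
        ∏ j, (zbinom (2 * a (σ j)) (2 * d j - 1) : ℚ) := by
  rw [Pnt, sum_eq_single_of_mem n (by simp [hn])]
  · have hA : powersetCard n (univ : Finset (Fin n)) = {univ} := by
      simpa using powersetCard_self (univ : Finset (Fin n))
    simp [hA, Parts_self_eq_image, sum_image (injective_perm_singletons n).injOn,
      dfRatio_one, mul_div_assoc]
  · intro k hk hkn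
    have hA : powersetCard n (univ : Finset (Fin k)) = ∅ :=
      powersetCard_eq_empty.2 (by simp at hk ⊢; omega)
    simp [hA]

lemma sum_antidiagonalTuple_prod_zbinom_two_mul_sub_one {n : ℕ} (m : Fin n → ℕ) (N : ℕ) :
    ∑ d ∈ antidiagonalTuple n N, ∏ j, (zbinom (m j) (2 * d j - 1) : ℚ)
      = ∑ o ∈ (antidiagonalTuple n (2 * N - n)).filter (fun o => ∀ j, Odd (o j)),
          ∏ j, ((m j).choose (o j) : ℚ) := by
  rw [← sum_filter_of_ne (p := fun d : Fin n → ℕ => ∀ j, 0 < d j)]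
  swap
  · intro d _ hprod j
    by_contra hj
    exact hprod (prod_eq_zero (mem_univ j) (by simp [Nat.eq_zero_of_not_pos hj, zbinom_of_neg]))
  refine sum_nbij' (fun d j => 2 * d j - 1) (fun o j => (o j + 1) / 2) ?_ ?_ ?_ ?_ ?_
  · intro d hd
    simp only [mem_filter, mem_antidiagonalTuple] at hd ⊢
    refine ⟨?_, fun j => ⟨d j - 1, by have := hd.2 j; omega⟩⟩
    rw [sum_tsub_distrib _ fun j _ => by have := hd.2 j; omega, ← mul_sum, hd.1]
    simp
  · intro o ho
    simp only [mem_filter, mem_antidiagonalTuple] at ho ⊢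
    obtain ⟨hsum, hodd⟩ := ho
    have hn : n ≤ ∑ j, o j := by
      simpa using card_nsmul_le_sum univ o 1 fun j _ => (hodd j).pos
    have htwice : 2 * ∑ j, (o j + 1) / 2 = ∑ j, (o j + 1) := by
      rw [mul_sum]
      exact sum_congr rfl fun j _ => by obtain ⟨c, hc⟩ := hodd j; omega
    simp only [sum_add_distrib, sum_const, card_univ, Fintype.card_fin, smul_eq_mul,
      mul_one] at htwice
    exact ⟨by omega, fun j => by obtain ⟨c, hc⟩ := hodd j; omega⟩
  · intro d hd
    simp only [mem_filter] at hd
    funext j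
    dsimp only
    have := hd.2 j
    omega
  · intro o ho
    simp only [mem_filter] at ho
    funext j
    dsimp only
    obtain ⟨c, hc⟩ := ho.2 j
    omega
  · intro d hd
    simp only [mem_filter] at hd
    refine prod_congr rfl fun j _ => ?_
    have := hd.2 j
    rw [show 2 * (d j : ℤ) - 1 = ((2 * d j - 1 : ℕ) : ℤ) by omega, zbinom_natCast,
      Int.cast_natCast]

lemma sum_prod_comp_perm {n : ℕ} {α β R : Type*} [CommSemiring R] {T : Finset (Fin n → α)}
    (σ : Equiv.Perm (Fin n)) (hT : ∀ o ∈ T, ∀ τ : Equiv.Perm (Fin n), o ∘ τ ∈ T)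
    (F : β → α → R) (b : Fin n → β) :
    ∑ o ∈ T, ∏ j, F (b (σ j)) (o j) = ∑ o ∈ T, ∏ j, F (b j) (o j) := by
  refine sum_nbij' (· ∘ σ.symm) (· ∘ σ) (fun o ho => hT o ho _) (fun o ho => hT o ho _)
    (fun o _ => by ext; simp) (fun o _ => by ext; simp) fun o _ => ?_
  simpa using Equiv.prod_comp σ fun j => F (b j) (o (σ.symm j))

lemma comp_perm_mem_filter_odd {n M : ℕ} {o : Fin n → ℕ}
    (ho : o ∈ (antidiagonalTuple n M).filter fun o => ∀ j, Odd (o j)) (σ : Equiv.Perm (Fin n)) :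
    o ∘ σ ∈ (antidiagonalTuple n M).filter fun o => ∀ j, Odd (o j) := by
  simp only [mem_filter, mem_antidiagonalTuple, Function.comp_apply] at ho ⊢
  exact ⟨(Equiv.sum_comp σ o).trans ho.1, fun j => ho.2 (σ j)⟩

theorem statement12_general (g n : ℕ) (hg : 2 ≤ g) (hn : 1 ≤ n) (a : Fin n → ℕ) :
    Pnt g n 0 a = (2 * (g : ℚ) - 3 + n) * An g n a := by
  rw [An]
  set S := ∑ o ∈ (antidiagonalTuple n (2 * g - 4 + n)).filter (fun o => ∀ j, Odd (o j)),
      ∏ j, ((2 * a j).choose (o j) : ℚ)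
  have hterm (σ : Equiv.Perm (Fin n)) : ∑ d ∈ antidiagonalTuple n (g - 2 + n),
      ∏ j, (zbinom (2 * a (σ j)) (2 * d j - 1) : ℚ) = S := by
    rw [sum_antidiagonalTuple_prod_zbinom_two_mul_sub_one,
      show 2 * (g - 2 + n) - n = 2 * g - 4 + n by omega]
    exact sum_prod_comp_perm σ (fun o ho => comp_perm_mem_filter_odd ho)
      (fun m r => (m.choose r : ℚ)) (fun j => 2 * a j)
  have hfact :
      ((2 * g - 3 + n).factorial : ℚ) = (2 * g - 3 + n) * (2 * g - 4 + n).factorial := by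
    rw [show 2 * g - 3 + n = 2 * g - 4 + n + 1 by omega, Nat.factorial_succ]
    push_cast [Nat.cast_sub (by omega : 4 ≤ 2 * g)]
    ring
  rw [Pnt_zero_eq g hn, sum_congr rfl fun σ _ => hterm σ, sum_const, card_univ,
    Fintype.card_perm, Fintype.card_fin, nsmul_eq_mul, hfact]
  field_simp

theorem statement12 (g n : ℕ) (hg : 2 ≤ g) (hn : 1 ≤ n) (a : Fin n → ℕ)
    (ha : ∑ j, a j = 2 * g - 3 + n) :
    Pnt g n 0 a = (2 * (g : ℚ) - 3 + n) * An g n a :=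
  statement12_general g n hg hn a
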